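/- arXiv:1701.06041 — 2 statements merged into one kernel-verified Lean document; each statement's English description precedes it below -/
import Mathlib

section
/- Define T(x, n) = (e^{−x}·n^4/x^4)·(2 − x/n)^3·(2 + (2n−1)·x/n + x²) for x > 0 and positive integers n, and set β_n = 4·log n − 2·log(log n). Then T(β_n, n) → 1/2 as n → ∞. -/
/-!
With `L = log n` the choice of `β = βₙ` makes `e^{-β} = L² / n⁴` exactly, so
`T(β, n) = (L/β)² (2 - β/n)³ (1 + (2 - 1/n)/β + 2/β²)`.
Since `β/L = 4 - 2 log L / L → 4`, we get `L/β → 1/4`, `β → ∞` and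
`β/n = (β/L)(L/n) → 0`, so the product tends to `(1/4)² · 2³ · 1 = 1/2`.
-/

/-- `T(x, n) = (e^{-x} n⁴ / x⁴) (2 - x/n)³ (2 + (2n-1)x/n + x²)`. -/
noncomputable def Tfn (x : ℝ) (n : ℕ) : ℝ :=
  Real.exp (-x) * (n : ℝ) ^ 4 / x ^ 4 * (2 - x / n) ^ 3
    * (2 + (2 * n - 1) * x / n + x ^ 2)

/-- `β_n = 4 log n - 2 log (log n)`. -/
noncomputable def betaSeq (n : ℕ) : ℝ :=
  4 * Real.log n - 2 * Real.log (Real.log n)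

open Filter Real Topology

lemma log_natCast_pos {n : ℕ} (hn : 2 ≤ n) : 0 < log n :=
  log_pos (by exact_mod_cast hn)

lemma tendsto_log_natCast_atTop : Tendsto (fun n : ℕ ↦ log n) atTop atTop :=
  tendsto_log_atTop.comp tendsto_natCast_atTop_atTop

lemma betaSeq_pos {n : ℕ} (hn : 2 ≤ n) : 0 < betaSeq n := by
  have hL := log_natCast_pos hn
  have := log_le_sub_one_of_pos hL
  unfold betaSeq
  linarith

lemma exp_neg_betaSeq {n : ℕ} (hn : 2 ≤ n) : exp (-betaSeq n) = log n ^ 2 / (n : ℝ) ^ 4 := by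
  have hL := log_natCast_pos hn
  have hn0 : (0 : ℝ) < n := by positivity
  rw [betaSeq, neg_sub, exp_sub, ← log_rpow hL, ← log_rpow hn0, exp_log (by positivity),
    exp_log (by positivity)]
  norm_cast

lemma Tfn_betaSeq {n : ℕ} (hn : 2 ≤ n) :
    Tfn (betaSeq n) n = (log n / betaSeq n) ^ 2 * (2 - betaSeq n / n) ^ 3 *
      (1 + (2 - (n : ℝ)⁻¹) * (betaSeq n)⁻¹ + 2 * ((betaSeq n)⁻¹) ^ 2) := by
  have hβ := (betaSeq_pos hn).ne'
  have hn0 : (n : ℝ) ≠ 0 := by positivity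
  rw [Tfn, exp_neg_betaSeq hn]
  field_simp
  ring

lemma tendsto_betaSeq_div_log :
    Tendsto (fun n : ℕ ↦ betaSeq n / log n) atTop (𝓝 4) := by
  have hloglog : Tendsto (fun n : ℕ ↦ log (log n) / log n) atTop (𝓝 0) :=
    isLittleO_log_id_atTop.tendsto_div_nhds_zero.comp tendsto_log_natCast_atTop
  have h := (hloglog.const_mul 2).const_sub 4
  rw [mul_zero, sub_zero] at h
  refine h.congr' ?_
  filter_upwards [eventually_ge_atTop 2] with n hn
  rw [betaSeq, sub_div, mul_div_cancel_right₀ _ (log_natCast_pos hn).ne', mul_div_assoc]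

lemma tendsto_log_div_betaSeq :
    Tendsto (fun n : ℕ ↦ log n / betaSeq n) atTop (𝓝 (1 / 4)) := by
  simpa only [inv_div, one_div] using tendsto_betaSeq_div_log.inv₀ four_ne_zero

lemma tendsto_betaSeq_atTop : Tendsto betaSeq atTop atTop := by
  refine (tendsto_betaSeq_div_log.pos_mul_atTop four_pos
    tendsto_log_natCast_atTop).congr' ?_
  filter_upwards [eventually_ge_atTop 2] with n hn
  exact div_mul_cancel₀ _ (log_natCast_pos hn).ne'

lemma tendsto_betaSeq_div_self :
    Tendsto (fun n : ℕ ↦ betaSeq n / n) atTop (𝓝 0) := by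
  have hLn : Tendsto (fun n : ℕ ↦ log n / n) atTop (𝓝 0) :=
    isLittleO_log_id_atTop.tendsto_div_nhds_zero.comp tendsto_natCast_atTop_atTop
  have h := tendsto_betaSeq_div_log.mul hLn
  rw [mul_zero] at h
  refine h.congr' ?_
  filter_upwards [eventually_ge_atTop 2] with n hn
  exact div_mul_div_cancel₀ (log_natCast_pos hn).ne'

/-- `T(β_n, n) → 1/2` as `n → ∞`. -/
theorem tendsto_T_beta :
    Filter.Tendsto (fun n : ℕ => Tfn (betaSeq n) n) Filter.atTop (nhds (1 / 2)) := by
  have hβinv := tendsto_betaSeq_atTop.inv_tendsto_atTop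
  have hninv := tendsto_inv_atTop_zero.comp (tendsto_natCast_atTop_atTop (R := ℝ))
  have h := ((tendsto_log_div_betaSeq.pow 2).mul ((tendsto_betaSeq_div_self.const_sub 2).pow 3)).mul
    ((((hninv.const_sub 2).mul hβinv).const_add 1).add ((hβinv.pow 2).const_mul 2))
  rw [show (1 / 4 : ℝ) ^ 2 * (2 - 0) ^ 3 * (1 + (2 - 0) * 0 + 2 * 0 ^ 2) = 1 / 2 by norm_num] at h
  refine h.congr' ?_
  filter_upwards [eventually_ge_atTop 2] with n hn
  exact (Tfn_betaSeq hn).symm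
end

section
/- Define T(x, n) = (e^{−x}·n^4/x^4)·(2 − x/n)^3·(2 + (2n−1)·x/n + x²) for x > 0 and positive integers n, and set β_n = 4·log n − 2·log(log n). Then 0 < T(β_n, n) < 1 for every integer n ≥ 7. -/
open Real

lemma log_le_half_add_log_two_sub_one {y : ℝ} (hy : 0 < y) : log y ≤ y / 2 + log 2 - 1 := by
  have h := log_le_sub_one_of_pos (half_pos hy)
  rw [log_div hy.ne' two_ne_zero] at h
  linarith

lemma log_le_half_self {x : ℝ} (hx : 0 < x) : log x ≤ x / 2 := by
  linarith [log_le_half_add_log_two_sub_one hx, log_two_lt_d9]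

lemma le_log_of_seven_le {n : ℕ} (hn : 7 ≤ n) : (1.93 : ℝ) ≤ log n := by
  have hexp2 : exp 2 < 7.3891 := by
    rw [show (2 : ℝ) = 1 + 1 by norm_num, exp_add]
    nlinarith [exp_one_lt_d9, exp_pos 1]
  have hexp : exp 1.93 ≤ 7 := by
    -- `exp 1.93 = exp 2 / exp 0.07 ≤ 7.3891 / 1.07`
    have hsplit : exp 1.93 * exp 0.07 = exp 2 := by rw [← exp_add]; norm_num
    nlinarith [add_one_le_exp (0.07 : ℝ), exp_pos (1.93 : ℝ)]
  calc (1.93 : ℝ) ≤ log 7 := (le_log_iff_exp_le (by norm_num)).2 hexp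
    _ ≤ log n := log_le_log (by norm_num) (by exact_mod_cast hn)

lemma exp_neg_betaSeq_mul_pow_four {n : ℕ} (hn : 1 < n) :
    exp (-betaSeq n) * (n : ℝ) ^ 4 = log n ^ 2 := by
  have hn0 : (0 : ℝ) < n := by positivity
  have hL : 0 < log n := log_pos (by exact_mod_cast hn)
  rw [betaSeq, show -(4 * log n - 2 * log (log n)) = 2 * log (log n) - 4 * log n by ring,
    exp_sub, ← log_rpow hL, ← log_rpow hn0, exp_log (by positivity), exp_log (by positivity)]
  norm_cast
  field_simp

lemma three_mul_log_add_two_sub_le_betaSeq {n : ℕ} (hn : 1 < n) :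
    3 * log n + 2 - 2 * log 2 ≤ betaSeq n := by
  have := log_le_half_add_log_two_sub_one (log_pos (by exact_mod_cast hn : (1 : ℝ) < n))
  rw [betaSeq]
  linarith

lemma betaSeq_lt_two_mul {n : ℕ} (hn : 3 ≤ n) : betaSeq n < 2 * n := by
  have hn3 : (3 : ℝ) ≤ n := by exact_mod_cast hn
  have hL : 1 < log n := by
    rw [lt_log_iff_exp_lt (by linarith)]
    linarith [exp_one_lt_d9]
  have := log_le_half_self (by linarith : (0 : ℝ) < n)
  rw [betaSeq]
  linarith [log_pos hL]

lemma Tfn_factors_pos {x : ℝ} {n : ℕ} (hx : 0 < x) (hxn : x < 2 * n) :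
    0 < 2 - x / n ∧ 0 < 2 + (2 * n - 1) * x / n + x ^ 2 := by
  have hn : (0 : ℝ) < n := by linarith
  have hn1 : (1 : ℝ) ≤ n := Nat.one_le_cast.2 (Nat.cast_pos.1 hn)
  refine ⟨by rw [sub_pos, div_lt_iff₀ hn]; linarith, ?_⟩
  have : 0 < (2 * (n : ℝ) - 1) * x / n := div_pos (mul_pos (by linarith) hx) hn
  positivity

lemma Tfn_pos {x : ℝ} {n : ℕ} (hx : 0 < x) (hxn : x < 2 * n) : 0 < Tfn x n := by
  obtain ⟨h2, hlast⟩ := Tfn_factors_pos hx hxn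
  have hn : 0 < n := Nat.cast_pos.1 (by linarith : (0 : ℝ) < n)
  unfold Tfn
  positivity

lemma Tfn_le {x : ℝ} {n : ℕ} (hx : 0 < x) (hxn : x < 2 * n) :
    Tfn x n ≤ 8 * (exp (-x) * n ^ 4) * (x ^ 2 + 2 * x + 2) / x ^ 4 := by
  obtain ⟨h2, hlast_pos⟩ := Tfn_factors_pos hx hxn
  have hn : (0 : ℝ) < n := by linarith
  have hcube : (2 - x / n) ^ 3 ≤ 2 ^ 3 :=
    pow_le_pow_left₀ h2.le (by linarith [div_pos hx hn]) 3
  have hlast : 2 + (2 * n - 1) * x / n + x ^ 2 ≤ x ^ 2 + 2 * x + 2 := by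
    have : (2 * (n : ℝ) - 1) * x / n ≤ 2 * x := by rw [div_le_iff₀ hn]; nlinarith
    linarith
  calc Tfn x n
      ≤ exp (-x) * n ^ 4 / x ^ 4 * 2 ^ 3 * (x ^ 2 + 2 * x + 2) := by unfold Tfn; gcongr
    _ = 8 * (exp (-x) * n ^ 4) * (x ^ 2 + 2 * x + 2) / x ^ 4 := by ring

lemma eight_mul_sq_mul_lt_pow_four {L b : ℝ} (hL : 1.93 ≤ L) (hb : 3 * L + 0.613 ≤ b) :
    8 * L ^ 2 * (b ^ 2 + 2 * b + 2) < b ^ 4 := by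
  have hb₀ : 6.403 ≤ b := by linarith
  calc 8 * L ^ 2 * (b ^ 2 + 2 * b + 2)
      ≤ 8 * ((b - 0.613) / 3) ^ 2 * (b ^ 2 + 2 * b + 2) := by
        gcongr; linarith
    _ < b ^ 4 := by
        nlinarith [mul_nonneg (mul_nonneg (sub_nonneg.2 hb₀) (sub_nonneg.2 hb₀)) (sub_nonneg.2 hb₀),
          mul_nonneg (sub_nonneg.2 hb₀) (sub_nonneg.2 hb₀)]

/-- `0 < T(β_n, n) < 1` for every integer `n ≥ 7`. -/
theorem T_beta_pos_lt_one (n : ℕ) (hn : 7 ≤ n) :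
    0 < Tfn (betaSeq n) n ∧ Tfn (betaSeq n) n < 1 := by
  have hn1 : 1 < n := by omega
  have hL := le_log_of_seven_le hn
  have hβ := three_mul_log_add_two_sub_le_betaSeq hn1
  have hβ_pos : 0 < betaSeq n := by linarith [log_two_lt_d9]
  have hβn := betaSeq_lt_two_mul (by omega : 3 ≤ n)
  refine ⟨Tfn_pos hβ_pos hβn, ?_⟩
  calc Tfn (betaSeq n) n
      ≤ 8 * log n ^ 2 * (betaSeq n ^ 2 + 2 * betaSeq n + 2) / betaSeq n ^ 4 := by
        rw [← exp_neg_betaSeq_mul_pow_four hn1]; exact Tfn_le hβ_pos hβn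
    _ < 1 := by
        rw [div_lt_one (by positivity)]
        exact eight_mul_sq_mul_lt_pow_four hL (by linarith [log_two_lt_d9])
end
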